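/- arXiv:2402.06048 — 2 statements merged into one kernel-verified Lean document; each statement's English description precedes it below -/
import Mathlib

section
/- Proximal mapping of the ℓ∞-norm: let f ∈ ℝ^m and η > 0, let D = {u ∈ ℝ^m : ‖u‖₁ ≤ η} be the closed ℓ1-ball of radius η, and let P_D(f) denote the (unique) Euclidean projection of f onto D. Then f − P_D(f) is the unique minimizer over u ∈ ℝ^m of (1/2)‖f − u‖₂² + η‖u‖∞. -/
/-!
Write `q = f - p`. The projection gives the variational inequality `⟪q, w - p⟫ ≤ 0` on the
ℓ1-ball; testing it at the vertex `η • sign(q j) • e_j` with `|q j|` maximal, and combining with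
Hölder `⟪p, u⟫ ≤ ‖p‖₁ ‖u‖∞ ≤ η ‖u‖∞`, shows that `p = f - q` is a subgradient of `η ‖·‖∞` at
`q`. Expanding `‖f - u‖² = ‖p - (u - q)‖²` then yields the quadratic growth
`cost q + ½‖u - q‖² ≤ cost u`, which gives both minimality and uniqueness.
-/

open Finset

section L1Ball

variable {ι : Type*} [Fintype ι]

theorem convex_setOf_sum_abs_le (η : ℝ) :
    Convex ℝ {v : EuclideanSpace ℝ ι | ∑ i, |v i| ≤ η} := by
  intro x hx y hy a b ha hb hab
  calc ∑ i, |a * x i + b * y i|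
      ≤ ∑ i, (a * |x i| + b * |y i|) := sum_le_sum fun i _ => (abs_add_le _ _).trans_eq
        (by rw [abs_mul, abs_mul, abs_of_nonneg ha, abs_of_nonneg hb])
    _ = a * ∑ i, |x i| + b * ∑ i, |y i| := by rw [sum_add_distrib, mul_sum, mul_sum]
    _ ≤ a * η + b * η := by gcongr; exacts [hx, hy]
    _ = η := by rw [← add_mul, hab, one_mul]

theorem inner_le_sum_abs_mul_iSup_abs (v w : EuclideanSpace ℝ ι) :
    inner ℝ v w ≤ (∑ i, |v i|) * ⨆ i, |w i| := by
  rw [PiLp.inner_apply, sum_mul]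
  gcongr with i
  calc inner ℝ (v i) (w i) ≤ |v i| * |w i| := real_inner_le_norm _ _
    _ ≤ |v i| * ⨆ j, |w j| := by
        gcongr; exact le_ciSup (f := fun j => |w j|) (Finite.bddAbove_range _) i

theorem exists_sum_abs_le_inner_eq {η : ℝ} (hη : 0 ≤ η) (q : EuclideanSpace ℝ ι) :
    ∃ w : EuclideanSpace ℝ ι, ∑ i, |w i| ≤ η ∧ inner ℝ q w = η * ⨆ i, |q i| := by
  classical
  cases isEmpty_or_nonempty ι with
  | inl _ => exact ⟨0, by simp [hη], by simp⟩
  | inr _ =>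
    obtain ⟨j, hj⟩ := exists_eq_ciSup_of_finite (f := fun i => |q i|)
    refine ⟨EuclideanSpace.single j (η * SignType.sign (q j)), ?_, ?_⟩
    · simp only [PiLp.single_apply, apply_ite abs, abs_zero, sum_ite_eq', mem_univ, if_true,
        abs_mul, abs_of_nonneg hη]
      apply mul_le_of_le_one_right hη
      rcases lt_trichotomy (q j) 0 with h | h | h <;> simp [h]
    · rw [EuclideanSpace.inner_single_right, ← hj]
      simp [mul_assoc]

end L1Ball

theorem real_inner_sub_le_zero_of_forall_norm_sub_le {F : Type*} [NormedAddCommGroup F]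
    [InnerProductSpace ℝ F] {K : Set F} (hK : Convex ℝ K) {f p : F} (hp : p ∈ K)
    (hmin : ∀ v ∈ K, ‖f - p‖ ≤ ‖f - v‖) : ∀ w ∈ K, inner ℝ (f - p) (w - p) ≤ 0 := by
  have : Nonempty K := ⟨⟨p, hp⟩⟩
  refine (norm_eq_iInf_iff_real_inner_le_zero hK hp).1 (le_antisymm ?_ ?_)
  · exact le_ciInf fun w => hmin w w.2
  · exact ciInf_le ⟨0, by rintro _ ⟨w, rfl⟩; exact norm_nonneg _⟩ (⟨p, hp⟩ : K)

theorem half_norm_sq_add_le_of_inner_le {F : Type*} [NormedAddCommGroup F]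
    [InnerProductSpace ℝ F] {N : F → ℝ} {f q : F} (hN : ∀ u, inner ℝ (f - q) u ≤ N u)
    (hq : N q ≤ inner ℝ (f - q) q) (u : F) :
    1 / 2 * ‖f - q‖ ^ 2 + N q + 1 / 2 * ‖u - q‖ ^ 2 ≤ 1 / 2 * ‖f - u‖ ^ 2 + N u := by
  have hexp : ‖f - u‖ ^ 2 = ‖f - q‖ ^ 2 - 2 * inner ℝ (f - q) (u - q) + ‖u - q‖ ^ 2 := by
    rw [← norm_sub_sq_real]; congr 2; abel
  rw [hexp, inner_sub_right]
  linarith [hN u]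

theorem unique_min_half_norm_sq_add_of_inner_le {F : Type*} [NormedAddCommGroup F]
    [InnerProductSpace ℝ F] {N : F → ℝ} {f q : F} (hN : ∀ u, inner ℝ (f - q) u ≤ N u)
    (hq : N q ≤ inner ℝ (f - q) q) (u : F) :
    1 / 2 * ‖f - q‖ ^ 2 + N q ≤ 1 / 2 * ‖f - u‖ ^ 2 + N u ∧
      (1 / 2 * ‖f - u‖ ^ 2 + N u = 1 / 2 * ‖f - q‖ ^ 2 + N q → u = q) := by
  have hgrowth := half_norm_sq_add_le_of_inner_le hN hq u
  refine ⟨by linarith [sq_nonneg ‖u - q‖], fun heq => ?_⟩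
  have hsq : ‖u - q‖ ^ 2 = 0 := le_antisymm (by linarith) (sq_nonneg _)
  exact sub_eq_zero.1 (norm_eq_zero.1 (pow_eq_zero_iff two_ne_zero |>.1 hsq))

/-- **proximal map of the ℓ∞-norm.** Let `D` be the closed ℓ1-ball of radius
`η > 0` and `p = P_D(f)` the Euclidean projection of `f` onto `D`. Then `f − p` is the
unique minimizer of `u ↦ (1/2)‖f − u‖₂² + η ‖u‖∞`. -/
theorem prox_linf_eq_sub_proj_l1ball {m : ℕ} (f : EuclideanSpace ℝ (Fin m))
    (η : ℝ) (hη : 0 < η) (p : EuclideanSpace ℝ (Fin m))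
    (hpD : ∑ i, |p i| ≤ η)
    (hproj : ∀ v : EuclideanSpace ℝ (Fin m), (∑ i, |v i| ≤ η) → ‖f - p‖ ≤ ‖f - v‖) :
    let cost : EuclideanSpace ℝ (Fin m) → ℝ :=
      fun u => 1 / 2 * ‖f - u‖ ^ 2 + η * (⨆ i : Fin m, |u i|)
    ∀ u : EuclideanSpace ℝ (Fin m),
      cost (f - p) ≤ cost u ∧ (cost u = cost (f - p) → u = f - p) := by
  intro cost u
  have hfp : f - (f - p) = p := sub_sub_cancel f p
  have hsubgrad (u : EuclideanSpace ℝ (Fin m)) :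
      inner ℝ (f - (f - p)) u ≤ η * ⨆ i, |u i| := by
    rw [hfp]
    refine (inner_le_sum_abs_mul_iSup_abs p u).trans ?_
    gcongr
    exact Real.iSup_nonneg fun i => abs_nonneg _
  have hattained : η * (⨆ i, |(f - p) i|) ≤ inner ℝ (f - (f - p)) (f - p) := by
    obtain ⟨w, hwD, hw⟩ := exists_sum_abs_le_inner_eq hη.le (f - p)
    have hvar := real_inner_sub_le_zero_of_forall_norm_sub_le
      (K := {v : EuclideanSpace ℝ (Fin m) | ∑ i, |v i| ≤ η}) (convex_setOf_sum_abs_le η)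
      hpD hproj w hwD
    rw [inner_sub_right] at hvar
    rw [hfp, ← hw, real_inner_comm (f - p) p]
    linarith
  exact unique_min_half_norm_sq_add_of_inner_le hsubgrad hattained u
end

section
/- Nearest matrix with eigenvalues bounded below, in Frobenius norm: let A ∈ ℝ^{n×n} be symmetric with eigendecomposition A = E L Eᵀ, where E is orthogonal and L is diagonal, and let ε ∈ ℝ. Define A⁺ = E L⁺ Eᵀ where L⁺ is diagonal with L⁺_{ii} = max(ε, L_{ii}). Then for every symmetric matrix B ∈ ℝ^{n×n} with B − εI positive semidefinite, ‖A − A⁺‖_F ≤ ‖A − B‖_F. -/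
/-!
Conjugating by the orthogonal matrix `E` preserves the Frobenius norm, so one may compare
`L - L⁺` with `L - M`, where `M = Eᵀ B E`. Since `M - εI = Eᵀ (B - εI) E` is positive
semidefinite, every diagonal entry of `M` is at least `ε`, so each diagonal entry `d i - M i i`
of `L - M` is at least as large in absolute value as `d i - max ε (d i)`.
-/

open Matrix

namespace Matrix

lemma PosSemidef.le_diag_of_sub_smul_one {ι : Type*} [DecidableEq ι] {M : Matrix ι ι ℝ}
    {ε : ℝ}
    (hM : (M - ε • (1 : Matrix ι ι ℝ)).PosSemidef) (i : ι) : ε ≤ M i i := by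
  simpa using hM.diag_nonneg (i := i)

variable {m ι : Type*} [Fintype m] [Fintype ι]

lemma sum_sq_entries_eq_trace (X : Matrix m ι ℝ) :
    ∑ i, ∑ j, X i j ^ 2 = trace (Xᵀ * X) := by
  rw [Finset.sum_comm]
  simp [trace, mul_apply, sq]

lemma sum_sq_entries_conj_orthogonal [DecidableEq ι] {E : Matrix ι ι ℝ} (hE : Eᵀ * E = 1)
    (C : Matrix ι ι ℝ) :
    ∑ i, ∑ j, (E * C * Eᵀ) i j ^ 2 = ∑ i, ∑ j, C i j ^ 2 := by
  have hcancel : ∀ X : Matrix ι ι ℝ, Eᵀ * (E * X) = X := fun X => by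
    rw [← Matrix.mul_assoc, hE, Matrix.one_mul]
  have hgram : (E * C * Eᵀ)ᵀ * (E * C * Eᵀ) = E * (Cᵀ * C) * Eᵀ := by
    simp only [transpose_mul, transpose_transpose, Matrix.mul_assoc, hcancel]
  rw [sum_sq_entries_eq_trace, sum_sq_entries_eq_trace, hgram, trace_mul_cycle,
    ← Matrix.mul_assoc, hE, Matrix.one_mul]

lemma sum_sq_diag_le_sum_sq_entries (X : Matrix ι ι ℝ) :
    ∑ i, X i i ^ 2 ≤ ∑ i, ∑ j, X i j ^ 2 :=
  Finset.sum_le_sum fun i _ =>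
    Finset.single_le_sum (f := fun j => X i j ^ 2) (fun _ _ => sq_nonneg _) (Finset.mem_univ i)

lemma sum_sq_entries_diagonal [DecidableEq ι] (v : ι → ℝ) :
    ∑ i, ∑ j, diagonal v i j ^ 2 = ∑ i, v i ^ 2 := by
  simp [diagonal_apply, sq]

lemma transpose_mul_sub_smul_one_mul [DecidableEq ι] {E : Matrix ι ι ℝ} (hE : Eᵀ * E = 1)
    (B : Matrix ι ι ℝ) (ε : ℝ) :
    Eᵀ * (B - ε • (1 : Matrix ι ι ℝ)) * E = Eᵀ * B * E - ε • 1 := by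
  rw [Matrix.mul_sub, Matrix.sub_mul, Matrix.mul_smul, Matrix.smul_mul, Matrix.mul_one, hE]

end Matrix

lemma sq_sub_max_le_sq_sub {d ε m : ℝ} (hm : ε ≤ m) : (d - max ε d) ^ 2 ≤ (d - m) ^ 2 := by
  rcases le_total ε d with h | h
  · simp [max_eq_right h, sq_nonneg]
  · rw [max_eq_left h]
    nlinarith [mul_nonneg (sub_nonneg.2 hm) (sub_nonneg.2 h)]

theorem nearest_eigenvalue_clipped_matrix_general {n : ℕ} (E : Matrix (Fin n) (Fin n) ℝ)
    (hE : Eᵀ * E = 1) (d : Fin n → ℝ) (ε : ℝ)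
    (A : Matrix (Fin n) (Fin n) ℝ) (hA : A = E * diagonal d * Eᵀ)
    (B : Matrix (Fin n) (Fin n) ℝ)
    (hB : (B - ε • (1 : Matrix (Fin n) (Fin n) ℝ)).PosSemidef) :
    Real.sqrt (∑ i, ∑ j, ((A - E * diagonal (fun i => max ε (d i)) * Eᵀ) i j) ^ 2) ≤
      Real.sqrt (∑ i, ∑ j, ((A - B) i j) ^ 2) := by
  set M := Eᵀ * B * E
  have hM : ∀ i, ε ≤ M i i := PosSemidef.le_diag_of_sub_smul_one <| by
    simpa [transpose_mul_sub_smul_one_mul hE] using hB.conjTranspose_mul_mul_same E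
  have hAB : A - B = E * (diagonal d - M) * Eᵀ := by
    have hE' : E * Eᵀ = 1 := mul_eq_one_comm.mp hE
    have hB' : E * M * Eᵀ = B := by
      simp only [M, ← Matrix.mul_assoc, hE', Matrix.one_mul]
      rw [Matrix.mul_assoc, hE', Matrix.mul_one]
    rw [hA, ← hB', ← Matrix.sub_mul, ← Matrix.mul_sub]
  have hAA : A - E * diagonal (fun i => max ε (d i)) * Eᵀ
      = E * diagonal (fun i => d i - max ε (d i)) * Eᵀ := by
    rw [hA, ← Matrix.sub_mul, ← Matrix.mul_sub, ← diagonal_sub]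
  apply Real.sqrt_le_sqrt
  rw [hAB, hAA, sum_sq_entries_conj_orthogonal hE, sum_sq_entries_conj_orthogonal hE,
    sum_sq_entries_diagonal]
  calc ∑ i, (d i - max ε (d i)) ^ 2
      ≤ ∑ i, (diagonal d - M) i i ^ 2 :=
        Finset.sum_le_sum fun i _ => by simpa using sq_sub_max_le_sq_sub (d := d i) (hM i)
    _ ≤ _ := sum_sq_diag_le_sum_sq_entries _

/-- **nearest matrix with eigenvalues bounded below, Frobenius norm.**
Let `A = E L Eᵀ` be symmetric with `E` orthogonal and `L = diagonal d`, and let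
`A⁺ = E L⁺ Eᵀ` where `L⁺ = diagonal (fun i => max ε (d i))`. Then for every symmetric `B`
with `B − εI` positive semidefinite, `‖A − A⁺‖_F ≤ ‖A − B‖_F`. -/
theorem nearest_eigenvalue_clipped_matrix {n : ℕ} (E : Matrix (Fin n) (Fin n) ℝ)
    (hE : Eᵀ * E = 1) (d : Fin n → ℝ) (ε : ℝ)
    (A : Matrix (Fin n) (Fin n) ℝ) (hA : A = E * diagonal d * Eᵀ)
    (B : Matrix (Fin n) (Fin n) ℝ) (hBsymm : Bᵀ = B)
    (hB : (B - ε • (1 : Matrix (Fin n) (Fin n) ℝ)).PosSemidef) :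
    Real.sqrt (∑ i, ∑ j, ((A - E * diagonal (fun i => max ε (d i)) * Eᵀ) i j) ^ 2) ≤
      Real.sqrt (∑ i, ∑ j, ((A - B) i j) ^ 2) :=
  nearest_eigenvalue_clipped_matrix_general E hE d ε A hA B hB
end
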